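/- arXiv:2510.14068 — 4 statements merged into one kernel-verified Lean document; each statement's English description precedes it below -/
import Mathlib

section
/- Let d, r ∈ ℕ, let P_1,…,P_d and Q_1,…,Q_d be polytopes in ℝ^n, and let α_{ji} ∈ ℝ for j ∈ [r], i ∈ [d]. For each j ∈ [r] set P^j := Σ_{i=1}^d α_{ji}·P_i and Q^j := Σ_{i=1}^d α_{ji}·Q_i (Minkowski sums of scalar multiples of sets). Then dim( conv( ⋃_{j=1}^r ( P^j + Σ_{k∈[r],k≠j} Q^k ) ) + Σ_{j=1}^r Q^j ) ≤ Σ_{i=1}^d dim(P_i + Q_i) + r − 1. -/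
open Pointwise

noncomputable section SparseMaxout

/-- Vectors in `ℝ^n`. -/
abbrev Vec (n : ℕ) := Fin n → ℝ

/-- A polytope is the convex hull of a finite nonempty set of points. -/
def IsPolytope {n : ℕ} (P : Set (Vec n)) : Prop :=
  ∃ s : Finset (Vec n), s.Nonempty ∧ P = convexHull ℝ (s : Set (Vec n))

/-- A simplex is the convex hull of a finite nonempty affinely independent set of points. -/
def IsSimplex {n : ℕ} (S : Set (Vec n)) : Prop :=
  ∃ (k : ℕ) (pts : Fin k → Vec n), 0 < k ∧ AffineIndependent ℝ pts ∧
    S = convexHull ℝ (Set.range pts)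

/-- The support function `f_P(x) = max_{a ∈ P} ⟨a, x⟩` of a set `P`. -/
def suppFn {n : ℕ} (P : Set (Vec n)) (x : Vec n) : ℝ :=
  sSup ((fun a => ∑ i, a i * x i) '' P)

/-- The dimension of a polytope: the dimension of its affine hull. -/
def polyDim {n : ℕ} (P : Set (Vec n)) : ℕ :=
  Module.finrank ℝ (affineSpan ℝ P).direction

/-- A (representative of a) virtual polytope: a pair `(P, Q)` standing for `P - Q`. -/
abbrev VP (n : ℕ) := Set (Vec n) × Set (Vec n)

/-- Two pairs represent the same virtual polytope: `P₁ - Q₁ = P₂ - Q₂` iff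
`P₁ + Q₂ = P₂ + Q₁` (Minkowski sums). -/
def vEquiv {n : ℕ} (A B : VP n) : Prop :=
  A.1 + B.2 = B.1 + A.2

/-- Both components are polytopes. -/
def IsPolyPair {n : ℕ} (A : VP n) : Prop :=
  IsPolytope A.1 ∧ IsPolytope A.2

/-- Scalar multiple of a virtual polytope: `λ(P - Q) := λP - λQ`. -/
def vSMul {n : ℕ} (c : ℝ) (A : VP n) : VP n := (c • A.1, c • A.2)

/-- Convex hull of finitely many virtual polytopes:
`conv(P₁-Q₁, …, P_m-Q_m) := conv(⋃ᵢ (Pᵢ + Σ_{k≠i} Q_k)) - Σ_k Q_k`. -/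
def vConv {n m : ℕ} (V : Fin m → VP n) : VP n :=
  (convexHull ℝ (⋃ i, ((V i).1 + ∑ k ∈ Finset.univ.erase i, (V k).2)),
   ∑ k, (V k).2)

/-- The dimension of a virtual polytope: `min{dim(A + B) : V = A - B}` over
polytope representations. -/
def vDim {n : ℕ} (V : VP n) : ℕ :=
  sInf {m | ∃ A B : Set (Vec n), IsPolytope A ∧ IsPolytope B ∧
    vEquiv (A, B) V ∧ polyDim (A + B) = m}

/-- Support function of a virtual polytope: `f_{P-Q} := f_P - f_Q`. -/
def vSuppFn {n : ℕ} (V : VP n) (x : Vec n) : ℝ :=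
  suppFn V.1 x - suppFn V.2 x

/-- The recursively defined classes `Q̂_ℓ` of virtual polytopes dual to sparse maxout
networks with indegree constraints `d` and ranks `r` (layer `k` uses `d k`, `r k`);
membership is up to equality of virtual polytopes. -/
def Qhat (n : ℕ) (d r : ℕ → ℕ) : ℕ → Set (VP n)
  | 0 => {V | IsPolyPair V ∧ ∃ v : Vec n, vEquiv V ({v}, {0})}
  | (k+1) => {V | IsPolyPair V ∧
      ∃ (α : Fin (r (k+1)) → Fin (d (k+1)) → ℝ) (W : Fin (d (k+1)) → VP n),
        (∀ j, W j ∈ Qhat n d r k) ∧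
        vEquiv V (vConv (fun i => ∑ j, vSMul (α i j) (W j)))}

/-- `Q_n(ℓ,d,r)`: finite real linear combinations of elements of `Q̂_ℓ`. -/
def Qfull (n : ℕ) (d r : ℕ → ℕ) (ℓ : ℕ) : Set (VP n) :=
  {V | IsPolyPair V ∧ ∃ (p : ℕ) (c : Fin p → ℝ) (W : Fin p → VP n),
    (∀ i, W i ∈ Qhat n d r ℓ) ∧ vEquiv V (∑ i, vSMul (c i) (W i))}

/-- `m_ℓ = Σ_{k=1}^ℓ (r_k - 1) ∏_{i=k+1}^ℓ d_i`. -/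
def mval (d r : ℕ → ℕ) (ℓ : ℕ) : ℕ :=
  ∑ k ∈ Finset.Icc 1 ℓ, (r k - 1) * ∏ i ∈ Finset.Icc (k+1) ℓ, d i

/-- The recursively defined classes `N̂_ℓ` of functions computed by a single output
neuron of an indegree-`d`-constrained rank-`r` maxout network with `ℓ` hidden layers. -/
def Nhat (n : ℕ) (d r : ℕ → ℕ) : ℕ → Set ((Vec n) → ℝ)
  | 0 => {f | ∃ v : Vec n, f = fun x => ∑ i, v i * x i}
  | (k+1) => {f | ∃ (α : Fin (r (k+1)) → Fin (d (k+1)) → ℝ)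
      (g : Fin (d (k+1)) → (Vec n) → ℝ),
      (∀ j, g j ∈ Nhat n d r k) ∧
      f = fun x => ⨆ i, ∑ j, α i j * g j x}

/-- `N_n(ℓ,d,r)`: finite real linear combinations of functions in `N̂_ℓ`. -/
def Nfull (n : ℕ) (d r : ℕ → ℕ) (ℓ : ℕ) : Set ((Vec n) → ℝ) :=
  {f | ∃ (p : ℕ) (c : Fin p → ℝ) (g : Fin p → (Vec n) → ℝ),
    (∀ i, g i ∈ Nhat n d r ℓ) ∧ f = fun x => ∑ i, c i * g i x}

/-- Unconstrained single-neuron classes `N̂_ℓ` (no indegree constraint). -/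
def NhatU (n : ℕ) (r : ℕ → ℕ) : ℕ → Set ((Vec n) → ℝ)
  | 0 => {f | ∃ v : Vec n, f = fun x => ∑ i, v i * x i}
  | (k+1) => {f | ∃ (m : ℕ) (α : Fin (r (k+1)) → Fin m → ℝ)
      (g : Fin m → (Vec n) → ℝ),
      (∀ j, g j ∈ NhatU n r k) ∧
      f = fun x => ⨆ i, ∑ j, α i j * g j x}

/-- `N_n(ℓ,r)`: finite real linear combinations of functions in the unconstrained `N̂_ℓ`. -/
def NfullU (n : ℕ) (r : ℕ → ℕ) (ℓ : ℕ) : Set ((Vec n) → ℝ) :=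
  {f | ∃ (p : ℕ) (c : Fin p → ℝ) (g : Fin p → (Vec n) → ℝ),
    (∀ i, g i ∈ NhatU n r ℓ) ∧ f = fun x => ∑ i, c i * g i x}

/-- `MAX_n(m)`: finite real linear combinations of maxima of at most `m` linear functions. -/
def MAXn (n m : ℕ) : Set ((Vec n) → ℝ) :=
  {f | ∃ (p : ℕ) (β : Fin p → ℝ) (a : Fin p → Fin m → Vec n),
    f = fun x => ∑ i, β i * ⨆ j, ∑ t, a i j t * x t}
lemma vspan_le_of_vsub {n : ℕ} {s : Set (Vec n)} {T : Submodule ℝ (Vec n)}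
    (h : ∀ x ∈ s, ∀ y ∈ s, x - y ∈ T) : vectorSpan ℝ s ≤ T := by
  rw [vectorSpan_def, Submodule.span_le]
  rintro u ⟨x, hx, y, hy, rfl⟩
  simpa [vsub_eq_sub] using h x hx y hy

lemma mem_vspan_of_mem {n : ℕ} {s : Set (Vec n)} {x y : Vec n} (hx : x ∈ s) (hy : y ∈ s) :
    x - y ∈ vectorSpan ℝ s := by
  simpa [vsub_eq_sub] using vsub_mem_vectorSpan ℝ hx hy

lemma vspan_add_le {n : ℕ} (s t : Set (Vec n)) :
    vectorSpan ℝ (s + t) ≤ vectorSpan ℝ s ⊔ vectorSpan ℝ t := by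
  apply vspan_le_of_vsub
  rintro _ ⟨a, ha, b, hb, rfl⟩ _ ⟨a', ha', b', hb', rfl⟩
  have : a + b - (a' + b') = (a - a') + (b - b') := by abel
  rw [this]
  exact Submodule.add_mem _ (Submodule.mem_sup_left (mem_vspan_of_mem ha ha'))
    (Submodule.mem_sup_right (mem_vspan_of_mem hb hb'))

lemma vspan_smul_le {n : ℕ} (c : ℝ) (s : Set (Vec n)) :
    vectorSpan ℝ (c • s) ≤ vectorSpan ℝ s := by
  apply vspan_le_of_vsub
  rintro _ ⟨a, ha, rfl⟩ _ ⟨b, hb, rfl⟩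
  have : c • a - c • b = c • (a - b) := (smul_sub c a b).symm
  rw [this]
  exact Submodule.smul_mem _ _ (mem_vspan_of_mem ha hb)

lemma vspan_sum_le {n : ℕ} {ι : Type*} (t : Finset ι) (f : ι → Set (Vec n))
    {T : Submodule ℝ (Vec n)} (h : ∀ i ∈ t, vectorSpan ℝ (f i) ≤ T) :
    vectorSpan ℝ (∑ i ∈ t, f i) ≤ T := by
  induction t using Finset.cons_induction with
  | empty =>
      rw [Finset.sum_empty, ← Set.singleton_zero, vectorSpan_singleton]
      exact bot_le
  | cons a t ha ih =>
      rw [Finset.sum_cons]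
      exact (vspan_add_le _ _).trans (sup_le (h a (Finset.mem_cons_self a t))
        (ih fun i hi => h i (Finset.mem_cons_of_mem hi)))

lemma vspan_le_add_right {n : ℕ} (s t : Set (Vec n)) (ht : t.Nonempty) :
    vectorSpan ℝ s ≤ vectorSpan ℝ (s + t) := by
  obtain ⟨b, hb⟩ := ht
  apply vspan_le_of_vsub
  intro x hx y hy
  have : x - y = (x + b) - (y + b) := by abel
  rw [this]
  exact mem_vspan_of_mem (Set.add_mem_add hx hb) (Set.add_mem_add hy hb)

lemma vspan_le_add_left {n : ℕ} (s t : Set (Vec n)) (hs : s.Nonempty) :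
    vectorSpan ℝ t ≤ vectorSpan ℝ (s + t) := by
  rw [add_comm s t]; exact vspan_le_add_right t s hs

lemma sum_sets_nonempty {n : ℕ} {ι : Type*} (t : Finset ι) (f : ι → Set (Vec n))
    (h : ∀ i ∈ t, (f i).Nonempty) : (∑ i ∈ t, f i).Nonempty := by
  induction t using Finset.cons_induction with
  | empty => exact ⟨0, by simp [← Set.singleton_zero]⟩
  | cons a t ha ih =>
      rw [Finset.sum_cons]
      exact (h a (Finset.mem_cons_self a t)).add (ih fun i hi => h i (Finset.mem_cons_of_mem hi))

lemma my_finrank_sup_le {n : ℕ} (s t : Submodule ℝ (Vec n)) :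
    Module.finrank ℝ (s ⊔ t : Submodule ℝ (Vec n)) ≤ Module.finrank ℝ s + Module.finrank ℝ t := by
  have := Submodule.finrank_sup_add_finrank_inf_eq s t
  omega

lemma finrank_finsetSup_le {n : ℕ} {ι : Type*} (t : Finset ι) (W : ι → Submodule ℝ (Vec n)) :
    Module.finrank ℝ (t.sup W : Submodule ℝ (Vec n)) ≤ ∑ i ∈ t, Module.finrank ℝ (W i) := by
  induction t using Finset.cons_induction with
  | empty => simp
  | cons a t ha ih =>
      rw [Finset.sum_cons, Finset.sup_cons]
      exact (my_finrank_sup_le _ _).trans (by omega)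

lemma my_finrank_span_range_le {n m : ℕ} (v : Fin m → Vec n) :
    Module.finrank ℝ (Submodule.span ℝ (Set.range v)) ≤ m := by
  classical
  calc Module.finrank ℝ (Submodule.span ℝ (Set.range v)) ≤ (Set.range v).toFinset.card :=
        finrank_span_le_card _
    _ ≤ m := by
        rw [Set.toFinset_range]
        exact (Finset.card_image_le).trans (by simp)
/-- dimension bound for the convex hull of linear combinations of
virtual polytopes (stated on representatives). -/
theorem dim_conv_linear_combinations {n d r : ℕ} (hd : 1 ≤ d) (hr : 1 ≤ r)
    (P Q : Fin d → Set (Vec n))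
    (hP : ∀ i, IsPolytope (P i)) (hQ : ∀ i, IsPolytope (Q i))
    (α : Fin r → Fin d → ℝ) :
    polyDim (convexHull ℝ (⋃ j : Fin r,
        ((∑ i, α j i • P i) + ∑ k ∈ Finset.univ.erase j, ∑ i, α k i • Q i)) +
        ∑ j : Fin r, ∑ i, α j i • Q i)
      ≤ (∑ i, polyDim (P i + Q i)) + r - 1 := by
  classical
  have hPne : ∀ i, (P i).Nonempty := by
    intro i
    obtain ⟨s, hs, hEq⟩ := hP i
    rw [hEq]
    exact (Finset.coe_nonempty.mpr hs).convexHull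
  have hQne : ∀ i, (Q i).Nonempty := by
    intro i
    obtain ⟨s, hs, hEq⟩ := hQ i
    rw [hEq]
    exact (Finset.coe_nonempty.mpr hs).convexHull
  obtain ⟨m, rfl⟩ : ∃ m, r = m + 1 := ⟨r - 1, by omega⟩
  set D : Submodule ℝ (Vec n) :=
    Finset.univ.sup (fun i : Fin d => vectorSpan ℝ (P i + Q i)) with hDdef
  have hPj : ∀ j : Fin (m + 1), vectorSpan ℝ (∑ i, α j i • P i) ≤ D := by
    intro j
    refine vspan_sum_le _ _ (fun i _ => ?_)
    rw [hDdef]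
    exact (vspan_smul_le _ _).trans ((vspan_le_add_right _ _ (hQne i)).trans
      (Finset.le_sup (f := fun i => vectorSpan ℝ (P i + Q i)) (Finset.mem_univ i)))
  have hQj : ∀ j : Fin (m + 1), vectorSpan ℝ (∑ i, α j i • Q i) ≤ D := by
    intro j
    refine vspan_sum_le _ _ (fun i _ => ?_)
    rw [hDdef]
    exact (vspan_smul_le _ _).trans ((vspan_le_add_left _ _ (hPne i)).trans
      (Finset.le_sup (f := fun i => vectorSpan ℝ (P i + Q i)) (Finset.mem_univ i)))
  set A : Fin (m + 1) → Set (Vec n) := fun j =>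
    (∑ i, α j i • P i) + ∑ k ∈ Finset.univ.erase j, ∑ i, α k i • Q i with hAdef
  have hAspan : ∀ j, vectorSpan ℝ (A j) ≤ D := fun j =>
    (vspan_add_le _ _).trans (sup_le (hPj j)
      (vspan_sum_le _ _ fun k _ => hQj k))
  have hAne : ∀ j, (A j).Nonempty := by
    intro j
    refine (sum_sets_nonempty _ _ fun i _ => (hPne i).smul_set).add
      (sum_sets_nonempty _ _ fun k _ => sum_sets_nonempty _ _ fun i _ => (hQne i).smul_set)
  choose p hp using hAne
  set v : Fin m → Vec n := fun j => p j.succ - p 0 with hvdef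
  set S : Submodule ℝ (Vec n) := Submodule.span ℝ (Set.range v) with hSdef
  have hpv : ∀ j, p j - p 0 ∈ S := by
    intro j
    refine Fin.cases ?_ ?_ j
    · simp
    · intro i
      exact Submodule.subset_span ⟨i, rfl⟩
  have hU : vectorSpan ℝ (⋃ j, A j) ≤ D ⊔ S := by
    apply vspan_le_of_vsub
    intro x hx y hy
    obtain ⟨j, hj⟩ := Set.mem_iUnion.mp hx
    obtain ⟨k, hk⟩ := Set.mem_iUnion.mp hy
    have hx' : x - p j ∈ D := hAspan j (mem_vspan_of_mem hj (hp j))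
    have hy' : y - p k ∈ D := hAspan k (mem_vspan_of_mem hk (hp k))
    have hxy : x - y = ((x - p j) - (y - p k)) + ((p j - p 0) - (p k - p 0)) := by abel
    rw [hxy]
    exact Submodule.add_mem _
      (Submodule.mem_sup_left (Submodule.sub_mem _ hx' hy'))
      (Submodule.mem_sup_right (Submodule.sub_mem _ (hpv j) (hpv k)))
  have hconv : vectorSpan ℝ (convexHull ℝ (⋃ j, A j)) = vectorSpan ℝ (⋃ j, A j) := by
    rw [← direction_affineSpan, affineSpan_convexHull, direction_affineSpan]
  have hTot : vectorSpan ℝ (convexHull ℝ (⋃ j, A j) + ∑ j : Fin (m + 1), ∑ i, α j i • Q i)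
      ≤ D ⊔ S := by
    refine (vspan_add_le _ _).trans (sup_le ?_ ?_)
    · rw [hconv]; exact hU
    · exact (vspan_sum_le _ _ fun j _ => hQj j).trans le_sup_left
  have hdim : polyDim (convexHull ℝ (⋃ j, A j) + ∑ j : Fin (m + 1), ∑ i, α j i • Q i)
      = Module.finrank ℝ (vectorSpan ℝ
        (convexHull ℝ (⋃ j, A j) + ∑ j : Fin (m + 1), ∑ i, α j i • Q i)) := by
    rw [polyDim, direction_affineSpan]
  calc polyDim (convexHull ℝ (⋃ j, A j) + ∑ j : Fin (m + 1), ∑ i, α j i • Q i)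
      = Module.finrank ℝ (vectorSpan ℝ
        (convexHull ℝ (⋃ j, A j) + ∑ j : Fin (m + 1), ∑ i, α j i • Q i)) := hdim
    _ ≤ Module.finrank ℝ (D ⊔ S : Submodule ℝ (Vec n)) := Submodule.finrank_mono hTot
    _ ≤ Module.finrank ℝ D + Module.finrank ℝ S := my_finrank_sup_le _ _
    _ ≤ (∑ i, Module.finrank ℝ (vectorSpan ℝ (P i + Q i))) + m :=
        add_le_add (finrank_finsetSup_le _ _) (my_finrank_span_range_le v)
    _ = (∑ i, polyDim (P i + Q i)) + (m + 1) - 1 := by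
        have hpd : ∀ X : Set (Vec n), polyDim X = Module.finrank ℝ (vectorSpan ℝ X) := by
          intro X; rw [polyDim, direction_affineSpan]
        simp only [hpd]
        omega
end SparseMaxout
end

section
/- Fix ℓ ∈ ℕ₀ and d = (d_1,…,d_ℓ), r = (r_1,…,r_ℓ) ∈ ℕ^ℓ. Every virtual polytope V ∈ Q̂_ℓ satisfies dim(V) ≤ Σ_{k=1}^ℓ (r_k − 1)·∏_{i=k+1}^ℓ d_i. -/
open Pointwise

noncomputable section SparseMaxout

/-
A virtual polytope in `Q̂_ℓ` is a convex hull of `r_ℓ` linear combinations of `d_ℓ` elements of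
`Q̂_{ℓ-1}`. If each of those is represented as `A_j - B_j` with `A_j, B_j` parallel to a subspace
`L_j` of dimension at most `m_{ℓ-1}`, the linear combinations are differences of polytopes
parallel to `U = L_1 + ⋯ + L_d`, of dimension at most `d_ℓ m_{ℓ-1}`. The convex hull of `r_ℓ`
sets parallel to `U` is parallel to `U` plus the span of the differences of `r_ℓ` chosen points,
which adds at most `r_ℓ - 1` dimensions; this is the recurrence `m_ℓ = d_ℓ m_{ℓ-1} + (r_ℓ - 1)`.
Replacing the representatives inside `conv` is legitimate because equality of virtual polytopes
is transitive, which rests on the cancellation law for Minkowski sums of compact convex sets.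
-/

section VectorSpan

variable {k E : Type*} [Ring k] [AddCommGroup E] [Module k E]

theorem vectorSpan_le_of_forall_sub_mem {s : Set E} {U : Submodule k E}
    (h : ∀ x ∈ s, ∀ y ∈ s, x - y ∈ U) : vectorSpan k s ≤ U := by
  rw [vectorSpan_def, Submodule.span_le, Set.vsub_subset_iff]
  exact h

theorem vectorSpan_add_le (s t : Set E) :
    vectorSpan k (s + t) ≤ vectorSpan k s ⊔ vectorSpan k t :=
  vectorSpan_le_of_forall_sub_mem <| by
    rintro _ ⟨a, ha, b, hb, rfl⟩ _ ⟨a', ha', b', hb', rfl⟩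
    rw [add_sub_add_comm]
    exact Submodule.add_mem_sup (vsub_mem_vectorSpan k ha ha') (vsub_mem_vectorSpan k hb hb')

theorem vectorSpan_smul_le (c : k) (s : Set E) : vectorSpan k (c • s) ≤ vectorSpan k s :=
  vectorSpan_le_of_forall_sub_mem <| by
    rintro _ ⟨a, ha, rfl⟩ _ ⟨a', ha', rfl⟩
    rw [← smul_sub]
    exact Submodule.smul_mem _ c (vsub_mem_vectorSpan k ha ha')

theorem vectorSpan_sum_le {ι : Type*} (s : Finset ι) (f : ι → Set E) {U : Submodule k E}
    (h : ∀ i ∈ s, vectorSpan k (f i) ≤ U) : vectorSpan k (∑ i ∈ s, f i) ≤ U :=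
  Finset.sum_induction f (fun X => vectorSpan k X ≤ U)
    (fun _ _ hX hY => (vectorSpan_add_le _ _).trans (sup_le hX hY))
    (by rw [← Set.singleton_zero, vectorSpan_singleton]; exact bot_le) h

theorem vectorSpan_iUnion_le_sup {ι : Type*} (Y : ι → Set E) {p : ι → E} (hp : ∀ i, p i ∈ Y i)
    {U : Submodule k E} (hY : ∀ i, vectorSpan k (Y i) ≤ U) :
    vectorSpan k (⋃ i, Y i) ≤ U ⊔ vectorSpan k (Set.range p) :=
  vectorSpan_le_of_forall_sub_mem <| by
    simp only [Set.mem_iUnion]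
    rintro x ⟨i, hx⟩ y ⟨j, hy⟩
    rw [show x - y = ((x - p i) - (y - p j)) + (p i - p j) by abel]
    exact Submodule.add_mem_sup
      (sub_mem (hY i (vsub_mem_vectorSpan k hx (hp i))) (hY j (vsub_mem_vectorSpan k hy (hp j))))
      (vsub_mem_vectorSpan k (Set.mem_range_self i) (Set.mem_range_self j))

end VectorSpan

theorem Submodule.finrank_sum_le {K V ι : Type*} [DivisionRing K] [AddCommGroup V] [Module K V]
    [FiniteDimensional K V] (s : Finset ι) (L : ι → Submodule K V) :
    Module.finrank K ↥(∑ i ∈ s, L i) ≤ ∑ i ∈ s, Module.finrank K (L i) :=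
  Finset.le_sum_of_subadditive (fun U : Submodule K V => Module.finrank K U) (by simp)
    (fun U W => (Submodule.add_eq_sup U W).symm ▸ finrank_add_le_finrank_add_finrank U W) s L

theorem convexHull_iUnion_convexHull {𝕜 E : Type*} [Semiring 𝕜] [PartialOrder 𝕜]
    [AddCommMonoid E] [Module 𝕜 E] {ι : Sort*} (s : ι → Set E) :
    convexHull 𝕜 (⋃ i, convexHull 𝕜 (s i)) = convexHull 𝕜 (⋃ i, s i) :=
  (convexHull_min (Set.iUnion_subset fun i => convexHull_mono (Set.subset_iUnion s i))
    (convex_convexHull 𝕜 _)).antisymm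
    (convexHull_mono (Set.iUnion_mono fun _ => subset_convexHull 𝕜 _))

theorem vectorSpan_convexHull {𝕜 E : Type*} [Ring 𝕜] [PartialOrder 𝕜] [AddCommGroup E]
    [Module 𝕜 E] (s : Set E) : vectorSpan 𝕜 (convexHull 𝕜 s) = vectorSpan 𝕜 s := by
  rw [← direction_affineSpan, affineSpan_convexHull, direction_affineSpan]

theorem convexHull_iUnion_add {𝕜 E : Type*} [Field 𝕜] [LinearOrder 𝕜] [IsStrictOrderedRing 𝕜]
    [AddCommGroup E] [Module 𝕜 E] {ι : Sort*} (s : ι → Set E) {C : Set E} (hC : Convex 𝕜 C) :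
    convexHull 𝕜 (⋃ i, s i) + C = convexHull 𝕜 (⋃ i, (s i + C)) := by
  rw [← Set.iUnion_add, convexHull_add, hC.convexHull_eq]

/-- Rådström's cancellation law. -/
theorem subset_of_add_subset_add {E : Type*} [TopologicalSpace E] [AddCommGroup E]
    [IsTopologicalAddGroup E] [Module ℝ E] [ContinuousSMul ℝ E] [LocallyConvexSpace ℝ E]
    {A B K : Set E} (hB : Convex ℝ B) (hBc : IsClosed B) (hK : IsCompact K) (hKne : K.Nonempty)
    (h : A + K ⊆ B + K) : A ⊆ B := by
  intro a ha
  by_contra haB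
  obtain ⟨f, u, hfB, hfa⟩ := geometric_hahn_banach_closed_point hB hBc haB
  -- translate `a` by a point of `K` where `f` is maximal
  obtain ⟨c, hc, hcmax⟩ := hK.exists_isMaxOn hKne f.continuous.continuousOn
  obtain ⟨b, hb, c', hc', hbc⟩ := h (Set.add_mem_add ha hc)
  have hf : f b + f c' = f a + f c := by rw [← map_add, ← map_add]; exact congrArg f hbc
  linarith [hfB b hb, show f c' ≤ f c from hcmax hc']

theorem eq_of_add_eq_add {E : Type*} [TopologicalSpace E] [AddCommGroup E]
    [IsTopologicalAddGroup E] [Module ℝ E] [ContinuousSMul ℝ E] [LocallyConvexSpace ℝ E]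
    {A B K : Set E} (hA : Convex ℝ A) (hAc : IsClosed A) (hB : Convex ℝ B) (hBc : IsClosed B)
    (hK : IsCompact K) (hKne : K.Nonempty) (h : A + K = B + K) : A = B :=
  (subset_of_add_subset_add hB hBc hK hKne h.le).antisymm
    (subset_of_add_subset_add hA hAc hK hKne h.ge)

variable {n : ℕ}

theorem isPolytope_singleton (v : Vec n) : IsPolytope {v} :=
  ⟨{v}, Finset.singleton_nonempty v, by simp⟩

namespace IsPolytope

variable {P Q : Set (Vec n)}

theorem nonempty (hP : IsPolytope P) : P.Nonempty := by
  obtain ⟨s, hs, rfl⟩ := hP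
  exact hs.to_set.convexHull

theorem convex (hP : IsPolytope P) : Convex ℝ P := by
  obtain ⟨s, -, rfl⟩ := hP
  exact convex_convexHull ℝ _

theorem isCompact (hP : IsPolytope P) : IsCompact P := by
  obtain ⟨s, -, rfl⟩ := hP
  exact s.finite_toSet.isCompact_convexHull (𝕜 := ℝ)

theorem add (hP : IsPolytope P) (hQ : IsPolytope Q) : IsPolytope (P + Q) := by
  classical
  obtain ⟨s, hs, rfl⟩ := hP
  obtain ⟨t, ht, rfl⟩ := hQ
  exact ⟨s + t, hs.add ht, by rw [Finset.coe_add, convexHull_add]⟩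

theorem smul (c : ℝ) (hP : IsPolytope P) : IsPolytope (c • P) := by
  classical
  obtain ⟨s, hs, rfl⟩ := hP
  exact ⟨c • s, hs.smul_finset, by rw [Finset.coe_smul_finset, convexHull_smul]⟩

end IsPolytope

theorem isPolytope_sum {ι : Type*} (s : Finset ι) (f : ι → Set (Vec n))
    (h : ∀ i ∈ s, IsPolytope (f i)) : IsPolytope (∑ i ∈ s, f i) :=
  Finset.sum_induction f IsPolytope (fun _ _ => IsPolytope.add) (isPolytope_singleton 0) h

theorem isPolytope_convexHull_iUnion {ι : Type*} [Fintype ι] [Nonempty ι] (f : ι → Set (Vec n))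
    (h : ∀ i, IsPolytope (f i)) : IsPolytope (convexHull ℝ (⋃ i, f i)) := by
  classical
  choose s hs hf using h
  refine ⟨Finset.univ.biUnion s, Finset.biUnion_nonempty.2 ?_, ?_⟩
  · exact ⟨Classical.arbitrary ι, Finset.mem_univ _, hs _⟩
  · simp only [hf, convexHull_iUnion_convexHull, Finset.coe_biUnion, Finset.coe_univ,
      Set.mem_univ, Set.iUnion_true]

theorem isPolyPair_vSMul (c : ℝ) {V : VP n} (hV : IsPolyPair V) : IsPolyPair (vSMul c V) :=
  ⟨hV.1.smul c, hV.2.smul c⟩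

theorem isPolyPair_sum {ι : Type*} (s : Finset ι) (V : ι → VP n)
    (h : ∀ i ∈ s, IsPolyPair (V i)) : IsPolyPair (∑ i ∈ s, V i) := by
  rw [IsPolyPair, Prod.fst_sum, Prod.snd_sum]
  exact ⟨isPolytope_sum s _ fun i hi => (h i hi).1, isPolytope_sum s _ fun i hi => (h i hi).2⟩

theorem isPolyPair_vConv {N : ℕ} [NeZero N] (T : Fin N → VP n) (hT : ∀ i, IsPolyPair (T i)) :
    IsPolyPair (vConv T) :=
  ⟨isPolytope_convexHull_iUnion _ fun i => (hT i).1.add (isPolytope_sum _ _ fun k _ => (hT k).2),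
    isPolytope_sum Finset.univ _ fun k _ => (hT k).2⟩

theorem isPolyPair_of_mem_Qhat {d r : ℕ → ℕ} {ℓ : ℕ} {V : VP n} (hV : V ∈ Qhat n d r ℓ) :
    IsPolyPair V := by
  cases ℓ <;> exact hV.1

theorem vEquiv.symm {V W : VP n} (h : vEquiv V W) : vEquiv W V :=
  Eq.symm h

theorem vEquiv.trans {U V W : VP n} (hU : IsPolyPair U) (hV : IsPolyPair V) (hW : IsPolyPair W)
    (hUV : vEquiv U V) (hVW : vEquiv V W) : vEquiv U W := by
  have hUW : (U.1 + W.2) + (V.1 + V.2) = (W.1 + U.2) + (V.1 + V.2) := by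
    calc (U.1 + W.2) + (V.1 + V.2) = (U.1 + V.2) + (V.1 + W.2) := by abel
      _ = (V.1 + U.2) + (W.1 + V.2) := by rw [hUV, hVW]
      _ = (W.1 + U.2) + (V.1 + V.2) := by abel
  have h₁ := hU.1.add hW.2
  have h₂ := hW.1.add hU.2
  have hV₀ := hV.1.add hV.2
  exact eq_of_add_eq_add h₁.convex h₁.isCompact.isClosed h₂.convex h₂.isCompact.isClosed
    hV₀.isCompact hV₀.nonempty hUW

theorem vEquiv_vSMul (c : ℝ) {V W : VP n} (h : vEquiv V W) : vEquiv (vSMul c V) (vSMul c W) := by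
  simp only [vEquiv, vSMul, ← smul_add]
  exact congrArg _ h

theorem vEquiv_sum {ι : Type*} (s : Finset ι) {V W : ι → VP n}
    (h : ∀ i ∈ s, vEquiv (V i) (W i)) : vEquiv (∑ i ∈ s, V i) (∑ i ∈ s, W i) := by
  simp only [vEquiv, Prod.fst_sum, Prod.snd_sum, ← Finset.sum_add_distrib]
  exact Finset.sum_congr rfl h

theorem vEquiv_vConv {N : ℕ} {T T' : Fin N → VP n} (hT : ∀ i, Convex ℝ (T i).2)
    (hT' : ∀ i, Convex ℝ (T' i).2) (h : ∀ i, vEquiv (T i) (T' i)) :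
    vEquiv (vConv T) (vConv T') := by
  have hsplit : ∀ (T T' : Fin N → VP n) (i : Fin N),
      (T i).1 + ∑ k ∈ Finset.univ.erase i, (T k).2 + ∑ k, (T' k).2 =
        ((T i).1 + (T' i).2) +
          (∑ k ∈ Finset.univ.erase i, (T k).2 + ∑ k ∈ Finset.univ.erase i, (T' k).2) := by
    intro T T' i
    rw [← Finset.add_sum_erase _ _ (Finset.mem_univ i)]
    abel
  simp only [vEquiv, vConv]
  rw [convexHull_iUnion_add _ (convex_sum _ fun k _ => hT' k),
    convexHull_iUnion_add _ (convex_sum _ fun k _ => hT k)]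
  congr 2 with i : 1
  rw [hsplit, hsplit, h i, add_comm (∑ k ∈ Finset.univ.erase i, (T k).2)]

theorem ne_zero_of_vEquiv_vConv {N : ℕ} {V : VP n} {T : Fin N → VP n} (hV : V.1.Nonempty)
    (h : vEquiv V (vConv T)) : N ≠ 0 := by
  rintro rfl
  simp [vEquiv, vConv, hV.ne_empty] at h

def HasPolyRepOfDimLE (m : ℕ) (V : VP n) : Prop :=
  ∃ P : VP n, IsPolyPair P ∧ vEquiv P V ∧ ∃ L : Submodule ℝ (Vec n),
    vectorSpan ℝ P.1 ≤ L ∧ vectorSpan ℝ P.2 ≤ L ∧ Module.finrank ℝ L ≤ m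

theorem vDim_le_of_hasPolyRepOfDimLE {m : ℕ} {V : VP n} (hV : HasPolyRepOfDimLE m V) :
    vDim V ≤ m := by
  obtain ⟨P, hP, hPV, L, h1, h2, hL⟩ := hV
  calc vDim V ≤ polyDim (P.1 + P.2) := Nat.sInf_le ⟨P.1, P.2, hP.1, hP.2, hPV, rfl⟩
    _ ≤ Module.finrank ℝ L := by
      rw [polyDim, direction_affineSpan]
      exact Submodule.finrank_mono ((vectorSpan_add_le _ _).trans (sup_le h1 h2))
    _ ≤ m := hL

theorem hasPolyRepOfDimLE_zero_of_vEquiv_singleton {V : VP n} {v : Vec n}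
    (h : vEquiv V ({v}, {0})) : HasPolyRepOfDimLE 0 V :=
  ⟨({v}, {0}), ⟨isPolytope_singleton v, isPolytope_singleton 0⟩, h.symm, ⊥,
    by simp, by simp, by simp⟩

theorem HasPolyRepOfDimLE.of_vEquiv {m : ℕ} {V W : VP n} (hV : IsPolyPair V)
    (hW : IsPolyPair W) (hVW : vEquiv V W) (h : HasPolyRepOfDimLE m V) :
    HasPolyRepOfDimLE m W := by
  obtain ⟨P, hP, hPV, hL⟩ := h
  exact ⟨P, hP, hPV.trans hP hV hW hVW, hL⟩

theorem vectorSpan_sum_vSMul_le {ι : Type*} (s : Finset ι) (c : ι → ℝ) (P : ι → VP n)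
    {U : Submodule ℝ (Vec n)} (h1 : ∀ i ∈ s, vectorSpan ℝ (P i).1 ≤ U)
    (h2 : ∀ i ∈ s, vectorSpan ℝ (P i).2 ≤ U) :
    vectorSpan ℝ (∑ i ∈ s, vSMul (c i) (P i)).1 ≤ U ∧
      vectorSpan ℝ (∑ i ∈ s, vSMul (c i) (P i)).2 ≤ U := by
  rw [Prod.fst_sum, Prod.snd_sum]
  exact ⟨vectorSpan_sum_le s _ fun i hi => (vectorSpan_smul_le _ _).trans (h1 i hi),
    vectorSpan_sum_le s _ fun i hi => (vectorSpan_smul_le _ _).trans (h2 i hi)⟩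

theorem exists_vectorSpan_vConv_le {N : ℕ} [NeZero N] {T : Fin N → VP n}
    (hT : ∀ i, IsPolyPair (T i)) {U : Submodule ℝ (Vec n)}
    (h1 : ∀ i, vectorSpan ℝ (T i).1 ≤ U) (h2 : ∀ i, vectorSpan ℝ (T i).2 ≤ U) :
    ∃ L : Submodule ℝ (Vec n), vectorSpan ℝ (vConv T).1 ≤ L ∧ vectorSpan ℝ (vConv T).2 ≤ L ∧
      Module.finrank ℝ L ≤ Module.finrank ℝ U + (N - 1) := by
  set Y : Fin N → Set (Vec n) := fun i => (T i).1 + ∑ k ∈ Finset.univ.erase i, (T k).2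
  have hY : ∀ i, vectorSpan ℝ (Y i) ≤ U := fun i =>
    (vectorSpan_add_le _ _).trans (sup_le (h1 i) (vectorSpan_sum_le _ _ fun k _ => h2 k))
  choose p hp using fun i => ((hT i).1.add (isPolytope_sum _ _ fun k _ => (hT k).2)).nonempty
  have hp_dim : Module.finrank ℝ (vectorSpan ℝ (Set.range p)) ≤ N - 1 :=
    finrank_vectorSpan_range_le ℝ p (by simp [Nat.sub_add_cancel NeZero.one_le])
  refine ⟨U ⊔ vectorSpan ℝ (Set.range p), ?_, ?_, ?_⟩
  · show vectorSpan ℝ (convexHull ℝ (⋃ i, Y i)) ≤ _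
    rw [vectorSpan_convexHull]
    exact vectorSpan_iUnion_le_sup Y hp hY
  · exact (vectorSpan_sum_le Finset.univ (fun k => (T k).2) fun k _ => h2 k).trans le_sup_left
  · exact (Submodule.finrank_add_le_finrank_add_finrank _ _).trans (Nat.add_le_add_left hp_dim _)

theorem HasPolyRepOfDimLE.vConv_sum_vSMul {m N D : ℕ} [NeZero N] (α : Fin N → Fin D → ℝ)
    {W : Fin D → VP n} (hW : ∀ j, IsPolyPair (W j)) (hWm : ∀ j, HasPolyRepOfDimLE m (W j)) :
    HasPolyRepOfDimLE (D * m + (N - 1)) (vConv fun i => ∑ j, vSMul (α i j) (W j)) := by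
  choose P hP hPW L hL1 hL2 hLm using hWm
  set U : Submodule ℝ (Vec n) := ∑ j, L j
  have hLU : ∀ j, L j ≤ U := fun j => Finset.single_le_sum (fun _ _ => zero_le) (Finset.mem_univ j)
  have hU : Module.finrank ℝ U ≤ D * m :=
    calc Module.finrank ℝ U ≤ ∑ j, Module.finrank ℝ (L j) := Submodule.finrank_sum_le _ _
      _ ≤ ∑ _j : Fin D, m := Finset.sum_le_sum fun j _ => hLm j
      _ = D * m := by simp
  set S : Fin N → VP n := fun i => ∑ j, vSMul (α i j) (P j)
  have hS : ∀ i, IsPolyPair (S i) := fun i =>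
    isPolyPair_sum _ _ fun j _ => isPolyPair_vSMul _ (hP j)
  have hSU : ∀ i, vectorSpan ℝ (S i).1 ≤ U ∧ vectorSpan ℝ (S i).2 ≤ U := fun i =>
    vectorSpan_sum_vSMul_le _ _ _ (fun j _ => (hL1 j).trans (hLU j))
      (fun j _ => (hL2 j).trans (hLU j))
  obtain ⟨L', h1, h2, hL'⟩ :=
    exists_vectorSpan_vConv_le hS (fun i => (hSU i).1) (fun i => (hSU i).2)
  have hSW : vEquiv (vConv S) (vConv fun i => ∑ j, vSMul (α i j) (W j)) :=
    vEquiv_vConv (fun i => (hS i).2.convex)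
      (fun i => (isPolyPair_sum _ _ fun j _ => isPolyPair_vSMul _ (hW j)).2.convex)
      fun i => vEquiv_sum _ fun j _ => vEquiv_vSMul _ (hPW j)
  exact ⟨vConv S, isPolyPair_vConv S hS, hSW, L', h1, h2, by omega⟩

theorem mval_zero (d r : ℕ → ℕ) : mval d r 0 = 0 := by
  simp [mval]

theorem mval_succ (d r : ℕ → ℕ) (k : ℕ) :
    mval d r (k + 1) = d (k + 1) * mval d r k + (r (k + 1) - 1) := by
  rw [mval, mval, Finset.sum_Icc_succ_top (Nat.le_add_left 1 k),
    Finset.Icc_eq_empty_of_lt (Nat.lt_succ_self (k + 1)), Finset.prod_empty, mul_one,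
    Finset.mul_sum]
  congr 1
  refine Finset.sum_congr rfl fun t ht => ?_
  rw [Finset.prod_Icc_succ_top (Nat.succ_le_succ (Finset.mem_Icc.1 ht).2)]
  ring

theorem hasPolyRepOfDimLE_of_mem_Qhat (d r : ℕ → ℕ) :
    ∀ ℓ, ∀ V ∈ Qhat n d r ℓ, HasPolyRepOfDimLE (mval d r ℓ) V
  | 0, _, ⟨_, _, hv⟩ => mval_zero d r ▸ hasPolyRepOfDimLE_zero_of_vEquiv_singleton hv
  | k + 1, V, ⟨hV, α, W, hW, hVW⟩ => by
    have : NeZero (r (k + 1)) := ⟨ne_zero_of_vEquiv_vConv hV.1.nonempty hVW⟩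
    have hWp : ∀ j, IsPolyPair (W j) := fun j => isPolyPair_of_mem_Qhat (hW j)
    have hconv := isPolyPair_vConv _ fun i => isPolyPair_sum Finset.univ _ fun j _ =>
      isPolyPair_vSMul (α i j) (hWp j)
    rw [mval_succ]
    exact (HasPolyRepOfDimLE.vConv_sum_vSMul α hWp
      fun j => hasPolyRepOfDimLE_of_mem_Qhat d r k (W j) (hW j)).of_vEquiv hconv hV hVW.symm

theorem vDim_Qhat_le_general {n : ℕ} (ℓ : ℕ) (d r : ℕ → ℕ) :
    ∀ V ∈ Qhat n d r ℓ, vDim V ≤ mval d r ℓ :=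
  fun V hV => vDim_le_of_hasPolyRepOfDimLE (hasPolyRepOfDimLE_of_mem_Qhat d r ℓ V hV)

/-- every virtual polytope in `Q̂_ℓ` has dimension at most
`m_ℓ = Σ_{k=1}^ℓ (r_k - 1) ∏_{i=k+1}^ℓ d_i`. -/
theorem vDim_Qhat_le {n : ℕ} (ℓ : ℕ) (d r : ℕ → ℕ)
    (hd : ∀ k, 1 ≤ d k) (hr : ∀ k, 1 ≤ r k) :
    ∀ V ∈ Qhat n d r ℓ, vDim V ≤ mval d r ℓ :=
  vDim_Qhat_le_general ℓ d r
end SparseMaxout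
end

section
/- Let P ⊆ ℝ^n be a polytope of dimension d. Then there exist p ∈ ℕ, reals β_1,…,β_p, and simplices S_1,…,S_p ⊆ ℝ^n, each of dimension at most d, such that the support functions satisfy f_P(x) = Σ_{i=1}^p β_i f_{S_i}(x) for all x ∈ ℝ^n. -/
open Pointwise

noncomputable section SparseMaxout

/-! If the finite set `s` with `P = conv s` is affinely dependent, Radon's theorem splits it as
`A ⊔ B` with `conv A ∩ conv B ≠ ∅`. For every direction `x`, some `b ∈ B` then lies below some
`a ∈ A` in direction `x`, so deleting `b` does not change the maximum of `⟨·, x⟩` over any `s \ D`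
with `D ⊆ B`; hence `∑_{D ⊆ B} (-1)^|D| f_{s \ D} = 0`, which writes `f_s` as a combination of
support functions of proper subsets of `s`. Induction on `|s|` ends at affinely independent subsets
of `s`, whose convex hulls are simplices of dimension at most `dim P`. -/

open Finset

theorem Submodule.exists_fin_sum_smul_eq_of_mem_span {R M : Type*} [Semiring R]
    [AddCommMonoid M] [Module R M] {G : Set M} (hG : G.Nonempty) {f : M}
    (hf : f ∈ Submodule.span R G) :
    ∃ (p : ℕ) (c : Fin p → R) (g : Fin p → M), 0 < p ∧ (∀ i, g i ∈ G) ∧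
      ∑ i, c i • g i = f := by
  obtain ⟨k, c, g, rfl⟩ := Submodule.mem_span_set'.mp hf
  obtain ⟨g₀, hg₀⟩ := hG
  refine ⟨k + 1, Fin.cons 0 c, Fin.cons g₀ fun i => g i, k.succ_pos, ?_, ?_⟩
  · exact Fin.cases hg₀ fun i => (g i).2
  · simp [Fin.sum_univ_succ]

theorem Finset.sum_powerset_neg_one_pow_card_mul_eq_zero {α R : Type*} [DecidableEq α]
    [CommRing R] {B : Finset α} {b : α} (hb : b ∈ B) (M : Finset α → R)
    (hM : ∀ D ⊆ B.erase b, M (insert b D) = M D) :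
    ∑ D ∈ B.powerset, (-1) ^ #D * M D = 0 := by
  rw [← insert_erase hb, sum_powerset_insert (notMem_erase b B), ← sum_add_distrib]
  refine sum_eq_zero fun D hD => ?_
  have hbD : b ∉ D := fun h => notMem_erase b B (mem_powerset.mp hD h)
  rw [card_insert_of_notMem hbD, hM D (mem_powerset.mp hD), pow_succ]
  ring

section DotProduct

variable {ι : Type*} [Fintype ι] {S : Set (ι → ℝ)} {z : ι → ℝ}

theorem exists_dotProduct_ge_of_mem_convexHull (hz : z ∈ convexHull ℝ S) (x : ι → ℝ) :
    ∃ a ∈ S, z ⬝ᵥ x ≤ a ⬝ᵥ x :=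
  (((dotProductBilin ℝ ℝ).flip x).convexOn convex_univ).exists_ge_of_mem_convexHull
    (Set.subset_univ S) hz

theorem exists_dotProduct_le_of_mem_convexHull (hz : z ∈ convexHull ℝ S) (x : ι → ℝ) :
    ∃ b ∈ S, b ⬝ᵥ x ≤ z ⬝ᵥ x :=
  (((dotProductBilin ℝ ℝ).flip x).concaveOn convex_univ).exists_le_of_mem_convexHull
    (Set.subset_univ S) hz

end DotProduct

theorem Finset.exists_convexHull_inter_convexHull_sdiff_nonempty {E : Type*} [AddCommGroup E]
    [Module ℝ E] [DecidableEq E] (s : Finset E) (hs : ¬ AffineIndependent ℝ ((↑) : s → E)) :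
    ∃ A ⊆ s, (convexHull ℝ (A : Set E) ∩ convexHull ℝ ↑(s \ A)).Nonempty := by
  classical
  obtain ⟨I, hI⟩ := Convex.radon_partition hs
  refine ⟨s.filter (· ∈ ((↑) : s → E) '' I), filter_subset _ s, ?_⟩
  convert hI using 3 <;> ext v
  · simp
  · simpa using ⟨fun ⟨hv, hvI⟩ => ⟨hv, hvI hv⟩, fun ⟨hv, hvI⟩ => ⟨hv, fun _ => hvI⟩⟩

section Polytope

variable {n : ℕ}

theorem suppFn_coe_finset (s : Finset (Vec n)) (hs : s.Nonempty) (x : Vec n) :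
    suppFn (s : Set (Vec n)) x = s.sup' hs (· ⬝ᵥ x) :=
  (s.sup'_eq_csSup_image hs _).symm

theorem suppFn_empty : suppFn (∅ : Set (Vec n)) = 0 := by
  funext x; simp [suppFn]

theorem suppFn_convexHull_coe_finset (s : Finset (Vec n)) :
    suppFn (convexHull ℝ (s : Set (Vec n))) = suppFn s := by
  funext x
  rcases s.eq_empty_or_nonempty with rfl | hs
  · simp
  rw [suppFn_coe_finset s hs]
  obtain ⟨a, ha, hmax⟩ := exists_mem_eq_sup' hs (· ⬝ᵥ x)
  refine IsGreatest.csSup_eq ⟨⟨a, subset_convexHull ℝ _ ha, hmax.symm⟩, ?_⟩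
  rintro _ ⟨y, hy, rfl⟩
  obtain ⟨b, hb, hyb⟩ := exists_dotProduct_ge_of_mem_convexHull hy x
  exact hyb.trans (le_sup' (· ⬝ᵥ x) hb)

theorem suppFn_insert_of_dotProduct_le {t : Finset (Vec n)} {a b x : Vec n} (ha : a ∈ t)
    (hab : b ⬝ᵥ x ≤ a ⬝ᵥ x) : suppFn ↑(insert b t) x = suppFn (t : Set (Vec n)) x := by
  rw [suppFn_coe_finset _ (insert_nonempty b t), suppFn_coe_finset t ⟨a, ha⟩, sup'_insert]
  exact sup_eq_right.mpr (hab.trans (le_sup' (· ⬝ᵥ x) ha))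

theorem sum_powerset_sdiff_suppFn_eq_zero {s A : Finset (Vec n)} (hA : A ⊆ s)
    (hAB : (convexHull ℝ (A : Set (Vec n)) ∩ convexHull ℝ ↑(s \ A)).Nonempty) (x : Vec n) :
    ∑ D ∈ (s \ A).powerset, (-1) ^ #D * suppFn ↑(s \ D) x = 0 := by
  obtain ⟨z, hzA, hzB⟩ := hAB
  obtain ⟨a, ha, hza⟩ := exists_dotProduct_ge_of_mem_convexHull hzA x
  obtain ⟨b, hb, hbz⟩ := exists_dotProduct_le_of_mem_convexHull hzB x
  rw [mem_coe] at ha hb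
  -- removing `b` never changes the maximum, since `a` survives every removal
  refine sum_powerset_neg_one_pow_card_mul_eq_zero hb _ fun D hD => ?_
  have hbD : b ∈ s \ D := by grind
  have haD : a ∈ (s \ D).erase b := by grind
  rw [sdiff_insert, ← suppFn_insert_of_dotProduct_le haD (hbz.trans hza), insert_erase hbD]

theorem suppFn_coe_finset_eq_sum_of_convexHull_inter_nonempty {s A : Finset (Vec n)}
    (hA : A ⊆ s) (hAB : (convexHull ℝ (A : Set (Vec n)) ∩ convexHull ℝ ↑(s \ A)).Nonempty) :
    suppFn (s : Set (Vec n)) =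
      ∑ D ∈ (s \ A).powerset.erase ∅, (-(-1) ^ #D : ℝ) • suppFn ↑(s \ D) := by
  funext x
  have h := sum_powerset_sdiff_suppFn_eq_zero hA hAB x
  rw [← add_sum_erase _ _ (empty_mem_powerset _)] at h
  simp only [card_empty, pow_zero, one_mul, sdiff_empty] at h
  simp only [Finset.sum_apply, Pi.smul_apply, smul_eq_mul, neg_mul, sum_neg_distrib]
  linarith

theorem suppFn_mem_span_affineIndependent (s₀ : Finset (Vec n)) :
    ∀ s ⊆ s₀, suppFn (s : Set (Vec n)) ∈ Submodule.span ℝ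
      {f | ∃ t ⊆ s₀, t.Nonempty ∧ AffineIndependent ℝ ((↑) : t → Vec n) ∧ suppFn ↑t = f} := by
  intro s
  induction s using Finset.strongInduction with
  | H s ih =>
    intro hs
    by_cases hind : AffineIndependent ℝ ((↑) : s → Vec n)
    · rcases s.eq_empty_or_nonempty with rfl | hne
      · simp [suppFn_empty]
      · exact Submodule.subset_span ⟨s, hs, hne, hind, rfl⟩
    obtain ⟨A, hA, hAB⟩ := s.exists_convexHull_inter_convexHull_sdiff_nonempty hind
    rw [suppFn_coe_finset_eq_sum_of_convexHull_inter_nonempty hA hAB]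
    refine Submodule.sum_mem _ fun D hD =>
      Submodule.smul_mem _ _ (ih _ ?_ (sdiff_subset.trans hs))
    have hDs : D ⊆ s := (mem_powerset.mp (mem_of_mem_erase hD)).trans sdiff_subset
    exact sdiff_ssubset hDs (nonempty_iff_ne_empty.mpr (ne_of_mem_erase hD))

theorem isSimplex_convexHull_coe_finset {t : Finset (Vec n)} (ht : t.Nonempty)
    (hind : AffineIndependent ℝ ((↑) : t → Vec n)) :
    IsSimplex (convexHull ℝ (t : Set (Vec n))) := by
  refine ⟨#t, (↑) ∘ t.equivFin.symm, card_pos.mpr ht,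
    (affineIndependent_equiv t.equivFin.symm).mpr hind, ?_⟩
  rw [Set.range_comp, t.equivFin.symm.range_eq_univ, Set.image_univ, Subtype.range_coe]

theorem polyDim_mono {S T : Set (Vec n)} (h : S ⊆ T) : polyDim S ≤ polyDim T :=
  Submodule.finrank_mono (AffineSubspace.direction_le (affineSpan_mono ℝ h))

end Polytope

/-- the support function of a `d`-dimensional polytope is a linear
combination of support functions of simplices of dimension at most `d`. -/
theorem suppFn_eq_linear_combination_of_simplices {n : ℕ} (P : Set (Vec n))
    (hP : IsPolytope P) (d : ℕ) (hdim : polyDim P = d) :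
    ∃ (p : ℕ) (β : Fin p → ℝ) (S : Fin p → Set (Vec n)), 0 < p ∧
      (∀ i, IsSimplex (S i) ∧ polyDim (S i) ≤ d) ∧
      ∀ x, suppFn P x = ∑ i, β i * suppFn (S i) x := by
  obtain ⟨s, ⟨v, hv⟩, rfl⟩ := hP
  set G := {f | ∃ S, IsSimplex S ∧ polyDim S ≤ d ∧ suppFn S = f}
  have hG : ∀ t ⊆ s, t.Nonempty → AffineIndependent ℝ ((↑) : t → Vec n) →
      suppFn (t : Set (Vec n)) ∈ G := fun t hts ht hind =>
    ⟨convexHull ℝ t, isSimplex_convexHull_coe_finset ht hind,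
      hdim ▸ polyDim_mono (convexHull_mono (coe_subset.mpr hts)), suppFn_convexHull_coe_finset t⟩
  have hspan : suppFn (convexHull ℝ (s : Set (Vec n))) ∈ Submodule.span ℝ G := by
    rw [suppFn_convexHull_coe_finset]
    refine Submodule.span_mono ?_ (suppFn_mem_span_affineIndependent s s subset_rfl)
    rintro _ ⟨t, hts, ht, hind, rfl⟩
    exact hG t hts ht hind
  obtain ⟨p, β, g, hp, hg, hsum⟩ := Submodule.exists_fin_sum_smul_eq_of_mem_span
    ⟨_, hG {v} (singleton_subset_iff.mpr hv) (singleton_nonempty v)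
      (affineIndependent_of_subsingleton ℝ _)⟩ hspan
  choose S hS hSd hSg using hg
  refine ⟨p, β, S, hp, fun i => ⟨hS i, hSd i⟩, fun x => ?_⟩
  simp [← hsum, hSg]
end SparseMaxout
end

section
/- Let n ≥ 3 and define f:ℝ^n→ℝ by f(x) = max{ Σ_{j=1}^{n−2} max{0, x_j}, x_{n−1}, x_n }. Then f ∉ MAX_n(n), i.e., f cannot be written as a finite real linear combination of maxima of at most n linear functions. -/
open Pointwise

noncomputable section SparseMaxout

/-!
Suppose `f = ∑ βᵢ gᵢ` with each `gᵢ` a maximum of `n` linear forms `aᵢⱼ` on `ℝⁿ`. Any `n` linear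
forms on `ℝⁿ` take a common value on some direction `uᵢ ≠ 0`, so `gᵢ` is affine along `uᵢ`.
Start from the kink of `f` across the hyperplane `x_{n-1} = x_n` (its second symmetric difference
along `ν = e_{n-1} - e_n`), then repeatedly take the jump along a direction `w` while passing to a
hyperplane of the current subspace, running down a flag `L₁ ⊃ L₂ ⊃ ⋯ ⊃ L_{n-1}`. At generic points
these jumps only see the faces of the polytopes `conv {aᵢⱼ}`, and a summand whose direction `uᵢ`
leaves the flag drops out: its active face is tied along the new direction. For `f` every jump
reproduces the same function `kink`. On the final line `L_{n-1} = ℝ e` with `e = e_{n-2}` the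
surviving summands are invariant under translation along the line, forcing `kink (-e) = kink e`,
whereas `kink (-e) = 2` and `kink e = 0`.
-/

open Filter Topology Finset

theorem Submodule.le_of_inf_ker_le {𝕜 V : Type*} [Field 𝕜] [AddCommGroup V] [Module 𝕜 V]
    {L M : Submodule 𝕜 V} {φ : Module.Dual 𝕜 V} {w : V} (h : L ⊓ LinearMap.ker φ ≤ M)
    (hwL : w ∈ L) (hwM : w ∈ M) (hφw : φ w ≠ 0) : L ≤ M := by
  intro q hq
  have hq' : q - (φ q / φ w) • w ∈ L ⊓ LinearMap.ker φ :=
    ⟨L.sub_mem hq (L.smul_mem _ hwL), by simp [div_mul_cancel₀ _ hφw]⟩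
  simpa using M.add_mem (h hq') (M.smul_mem (φ q / φ w) hwM)

namespace MaxLinear

theorem tendsto_add_mul (a b : ℝ) : Tendsto (fun s => a + s * b) (𝓝[>] 0) (𝓝 a) := by
  have : Continuous fun s : ℝ => a + s * b := by fun_prop
  simpa using (this.tendsto 0).mono_left nhdsWithin_le_nhds

theorem eventually_add_mul_ne_zero {a b : ℝ} (h : a ≠ 0 ∨ b ≠ 0) :
    ∀ᶠ s in 𝓝[>] (0 : ℝ), a + s * b ≠ 0 := by
  rcases eq_or_ne a 0 with rfl | ha
  · filter_upwards [self_mem_nhdsWithin] with s (hs : 0 < s)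
    simpa [hs.ne'] using h
  · exact (tendsto_add_mul a b).eventually_ne ha

theorem eventually_add_mul_le_iff (a b c d : ℝ) :
    ∀ᶠ s in 𝓝[>] (0 : ℝ), (a + s * b ≤ c + s * d ↔ a < c ∨ a = c ∧ b ≤ d) := by
  rcases lt_trichotomy a c with h | rfl | h
  · filter_upwards [(tendsto_add_mul a b).eventually_lt (tendsto_add_mul c d) h] with s hs
    simp [hs.le, h]
  · filter_upwards [self_mem_nhdsWithin] with s (hs : 0 < s)
    simp [mul_le_mul_iff_of_pos_left hs]
  · filter_upwards [(tendsto_add_mul c d).eventually_lt (tendsto_add_mul a b) h] with s hs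
    simp [hs, h.not_gt, h.ne']

section Maximizers

variable {ι : Type*} {f g : ι → ℝ} {K : Finset ι}

def maximizers (f : ι → ℝ) (K : Finset ι) : Finset ι :=
  K.filter fun j => ∀ j' ∈ K, f j' ≤ f j

theorem mem_maximizers {j : ι} : j ∈ maximizers f K ↔ j ∈ K ∧ ∀ j' ∈ K, f j' ≤ f j :=
  mem_filter

theorem maximizers_subset : maximizers f K ⊆ K := filter_subset _ _

theorem maximizers_nonempty (hK : K.Nonempty) : (maximizers f K).Nonempty := by
  obtain ⟨j, hj, hmax⟩ := K.exists_max_image f hK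
  exact ⟨j, mem_maximizers.2 ⟨hj, hmax⟩⟩

theorem apply_eq_of_mem_maximizers {j j' : ι} (hj : j ∈ maximizers f K)
    (hj' : j' ∈ maximizers f K) : f j = f j' :=
  le_antisymm ((mem_maximizers.1 hj').2 j (maximizers_subset hj))
    ((mem_maximizers.1 hj).2 j' (maximizers_subset hj'))

theorem maximizers_eq_self (h : ∀ j ∈ K, ∀ j' ∈ K, f j = f j') : maximizers f K = K :=
  filter_true_of_mem fun j hj j' hj' => (h j' hj' j hj).le

theorem maximizers_add_of_forall_eq (h : ∀ j j', g j = g j') :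
    maximizers (fun j => f j + g j) K = maximizers f K := by
  ext j
  simp only [mem_maximizers]
  refine and_congr_right fun _ => forall₂_congr fun j' _ => ?_
  rw [h j' j, add_le_add_iff_right]

theorem eventually_maximizers_add_mul (f g : ι → ℝ) (K : Finset ι) :
    ∀ᶠ s in 𝓝[>] (0 : ℝ),
      maximizers (fun j => f j + s * g j) K = maximizers g (maximizers f K) := by
  filter_upwards [(eventually_all_finset K).2 fun j _ => (eventually_all_finset K).2 fun j' _ =>
    eventually_add_mul_le_iff (f j') (g j') (f j) (g j)] with s hs
  ext j
  simp only [mem_maximizers]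
  constructor
  · rintro ⟨hjK, hj⟩
    have hlex := fun j' hj' => (hs j hjK j' hj').1 (hj j' hj')
    refine ⟨⟨hjK, fun j' hj' => ?_⟩, fun j' ⟨hj'K, hj'⟩ => ?_⟩
    · rcases hlex j' hj' with h | h
      exacts [h.le, h.1.le]
    · exact ((hlex j' hj'K).resolve_left (hj' j hjK).not_gt).2
  · rintro ⟨⟨hjK, hf⟩, hg⟩
    refine ⟨hjK, fun j' hj' => (hs j hjK j' hj').2 ?_⟩
    rcases (hf j' hj').lt_or_eq with h | h
    · exact Or.inl h
    · exact Or.inr ⟨h, hg j' ⟨hj', fun j'' hj'' => h ▸ hf j'' hj''⟩⟩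

def spread (f : ι → ℝ) (K : Finset ι) : ℝ :=
  if h : K.Nonempty then K.sup' h f - K.inf' h f else 0

theorem spread_eq {j j' : ι} (hj : j ∈ maximizers f K)
    (hj' : j' ∈ maximizers (fun i => -f i) K) : spread f K = f j - f j' := by
  have hK : K.Nonempty := ⟨j, maximizers_subset hj⟩
  rw [spread, dif_pos hK]
  congr 1
  · exact le_antisymm (sup'_le _ _ fun i hi => (mem_maximizers.1 hj).2 i hi)
      (le_sup' f (maximizers_subset hj))
  · exact le_antisymm (inf'_le f (maximizers_subset hj'))
      (le_inf' _ _ fun i hi => neg_le_neg_iff.1 ((mem_maximizers.1 hj').2 i hi))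

theorem spread_eq_zero (h : ∀ j ∈ K, ∀ j' ∈ K, f j = f j') : spread f K = 0 := by
  rcases K.eq_empty_or_nonempty with rfl | ⟨j, hj⟩
  · simp [spread]
  · have hj₁ : j ∈ maximizers f K := by rwa [maximizers_eq_self h]
    have hj₂ : j ∈ maximizers (fun i => -f i) K := by
      rwa [maximizers_eq_self fun i hi i' hi' => by rw [h i hi i' hi']]
    rw [spread_eq hj₁ hj₂, sub_self]

theorem ciSup_eq_of_mem_maximizers [Fintype ι] [Nonempty ι] {j : ι}
    (hj : j ∈ maximizers f univ) : ⨆ j', f j' = f j :=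
  le_antisymm (ciSup_le fun j' => (mem_maximizers.1 hj).2 j' (mem_univ j'))
    (le_ciSup (Set.finite_range f).bddAbove j)

end Maximizers

section Dual

variable {V ι : Type*} [AddCommGroup V] [Module ℝ V] {g : ι → Module.Dual ℝ V}
  {L : Submodule ℝ V} {φ : Module.Dual ℝ V} {x u w ν : V} {K : Finset ι}

theorem eventually_maximizers_apply_add_smul (g : ι → Module.Dual ℝ V) (x w : V) (K : Finset ι) :
    ∀ᶠ s in 𝓝[>] (0 : ℝ),
      maximizers (g · (x + s • w)) K = maximizers (g · w) (maximizers (g · x) K) := by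
  simpa only [map_add, map_smul, smul_eq_mul] using eventually_maximizers_add_mul (g · x) (g · w) K

theorem eventually_ciSup_second_difference [Fintype ι] [Nonempty ι] (g : ι → Module.Dual ℝ V)
    (x v : V) :
    ∀ᶠ s in 𝓝[>] (0 : ℝ), (⨆ j, g j (x + s • v)) + (⨆ j, g j (x + s • -v)) - 2 * ⨆ j, g j x =
      s * spread (g · v) (maximizers (g · x) univ) := by
  have hK := maximizers_nonempty (f := (g · x)) univ_nonempty
  obtain ⟨jp, hjp⟩ := maximizers_nonempty (f := (g · v)) hK
  obtain ⟨jm, hjm⟩ := maximizers_nonempty (f := (g · (-v))) hK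
  filter_upwards [eventually_maximizers_apply_add_smul g x v univ,
    eventually_maximizers_apply_add_smul g x (-v) univ] with s hp hm
  rw [ciSup_eq_of_mem_maximizers (hp ▸ hjp), ciSup_eq_of_mem_maximizers (hm ▸ hjm),
    ciSup_eq_of_mem_maximizers (maximizers_subset hjp), spread_eq hjp (by simpa using hjm)]
  simp only [map_add, map_smul, map_neg, smul_eq_mul]
  linear_combination -apply_eq_of_mem_maximizers (maximizers_subset hjp) (maximizers_subset hjm)

def IsLinealityDir (g : ι → Module.Dual ℝ V) (u : V) : Prop :=
  ∀ j j', g j u = g j' u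

theorem maximizers_apply_add_smul_of_isLinealityDir (hu : IsLinealityDir g u) (x : V) (t : ℝ)
    (K : Finset ι) : maximizers (g · (x + t • u)) K = maximizers (g · x) K := by
  simp only [map_add, map_smul, smul_eq_mul]
  exact maximizers_add_of_forall_eq fun j j' => by rw [hu j j']

theorem exists_ne_zero_isLinealityDir [FiniteDimensional ℝ V] [Fintype ι] [Nonempty ι]
    (g : ι → Module.Dual ℝ V) (h : Fintype.card ι ≤ Module.finrank ℝ V) :
    ∃ u ≠ 0, IsLinealityDir g u := by
  let Φ : V × ℝ →ₗ[ℝ] ι → ℝ :=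
    LinearMap.pi fun j => (g j).comp (LinearMap.fst ℝ V ℝ) - LinearMap.snd ℝ V ℝ
  have hker : LinearMap.ker Φ ≠ ⊥ :=
    LinearMap.ker_ne_bot_of_finrank_lt (by simp [Module.finrank_prod]; omega)
  obtain ⟨⟨u, c⟩, hΦ, hne⟩ := (Submodule.ne_bot_iff _).1 hker
  have hgu : ∀ j, g j u = c := fun j => by
    simpa [Φ, sub_eq_zero] using congrFun (LinearMap.mem_ker.1 hΦ) j
  refine ⟨u, fun hu => hne ?_, fun j j' => by rw [hgu, hgu]⟩
  subst hu
  obtain ⟨j⟩ := ‹Nonempty ι›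
  simp [← hgu j]

/-- All points of `L` off finitely many proper subspaces of `L` are generic. -/
def IsGeneric (g : ι → Module.Dual ℝ V) (L : Submodule ℝ V) (x : V) : Prop :=
  ∀ j j', g j x = g j' x → L ≤ LinearMap.ker (g j - g j')

theorem IsGeneric.eventually_add_smul [Finite ι] (hx : IsGeneric g (L ⊓ LinearMap.ker φ) x)
    (hw : w ∈ L) (hφw : φ w ≠ 0) : ∀ᶠ s in 𝓝[>] (0 : ℝ), IsGeneric g L (x + s • w) := by
  have : ∀ j j', ∀ᶠ s in 𝓝[>] (0 : ℝ),
      g j (x + s • w) = g j' (x + s • w) → L ≤ LinearMap.ker (g j - g j') := by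
    intro j j'
    by_cases hL : L ≤ LinearMap.ker (g j - g j')
    · exact Eventually.of_forall fun _ _ => hL
    have hne : (g j - g j') x ≠ 0 ∨ (g j - g j') w ≠ 0 := by
      by_contra! h
      exact hL (Submodule.le_of_inf_ker_le (hx j j' (by simpa [sub_eq_zero] using h.1)) hw h.2 hφw)
    filter_upwards [eventually_add_mul_ne_zero hne] with s hs heq
    simp only [map_add, map_smul, smul_eq_mul] at heq
    exact (hs (by simp only [LinearMap.sub_apply]; linarith)).elim
  simpa only [IsGeneric, eventually_all] using this

theorem IsGeneric.apply_eq_of_mem_maximizers (hx : IsGeneric g (L ⊓ LinearMap.ker φ) x)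
    (hu : IsLinealityDir g u) (huL : u ∈ L) (hφu : φ u ≠ 0) (hw : w ∈ L) {j j' : ι}
    (hj : j ∈ maximizers (g · x) K) (hj' : j' ∈ maximizers (g · x) K) : g j w = g j' w := by
  have hL := Submodule.le_of_inf_ker_le (hx j j' (MaxLinear.apply_eq_of_mem_maximizers hj hj')) huL
    (by simp [hu j j']) hφu
  simpa [sub_eq_zero] using hL hw

/-- `maximizers (g · x) univ` indexes the face of `conv (range g)` exposed by `x`, and refining it
by `w` gives the face exposed by `x + s • w` for small `s > 0`. `faceJump g ν ws K` is the
alternating sum, over the sign choices `±w` for `w ∈ ws` (refining by the head first), of the widths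
along `ν` of the resulting faces of `K`. -/
def faceJump (g : ι → Module.Dual ℝ V) (ν : V) : List V → Finset ι → ℝ
  | [], K => spread (g · ν) K
  | w :: ws, K => faceJump g ν ws (maximizers (g · w) K) - faceJump g ν ws (maximizers (g · (-w)) K)

theorem faceJump_cons_eq_zero {ws : List V} (h : ∀ j ∈ K, ∀ j' ∈ K, g j w = g j' w) :
    faceJump g ν (w :: ws) K = 0 := by
  rw [faceJump, maximizers_eq_self h, maximizers_eq_self fun j hj j' hj' => by
    rw [map_neg, map_neg, h j hj j' hj'], sub_self]

end Dual

section JumpExpansion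

variable {V ι κ : Type*} [AddCommGroup V] [Module ℝ V] [Fintype ι] [Fintype κ]
  {A : κ → ι → Module.Dual ℝ V} {β : κ → ℝ} {u : κ → V} {ν : V}

open Classical in
def HasJumpExpansion (A : κ → ι → Module.Dual ℝ V) (β : κ → ℝ) (u : κ → V) (ν : V)
    (L : Submodule ℝ V) (ws : List V) (F : V → ℝ) : Prop :=
  ∀ x ∈ L, (∀ i, IsGeneric (A i) L x) →
    F x = ∑ i ∈ univ.filter (u · ∈ L), β i * faceJump (A i) ν ws (maximizers (A i · x) univ)

theorem hasJumpExpansion_ker [Nonempty ι] {φ : Module.Dual ℝ V} {f F : V → ℝ}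
    (hu : ∀ i, IsLinealityDir (A i) (u i)) (hf : ∀ x, f x = ∑ i, β i * ⨆ j, A i j x)
    (hF : ∀ x ∈ LinearMap.ker φ, ∀ᶠ s in 𝓝[>] (0 : ℝ),
      f (x + s • ν) + f (x + s • -ν) - 2 * f x = s * F x) :
    HasJumpExpansion A β u ν (LinearMap.ker φ) [] F := by
  classical
  intro x hx hgen
  have hsum : ∀ᶠ s in 𝓝[>] (0 : ℝ), f (x + s • ν) + f (x + s • -ν) - 2 * f x =
      s * ∑ i, β i * spread (A i · ν) (maximizers (A i · x) univ) := by
    filter_upwards [eventually_all.2 fun i => eventually_ciSup_second_difference (A i) x ν]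
      with s hs
    simp only [hf, mul_sum, ← sum_add_distrib, ← sum_sub_distrib]
    exact sum_congr rfl fun i _ => by linear_combination β i * hs i
  obtain ⟨s, hs, hFs, hpos⟩ := (hsum.and ((hF x hx).and self_mem_nhdsWithin)).exists
  rw [mul_left_cancel₀ (ne_of_gt hpos) (hFs.symm.trans hs)]
  refine (sum_subset (filter_subset _ _) fun i _ hi => ?_).symm
  have hgen' : IsGeneric (A i) (⊤ ⊓ LinearMap.ker φ) x := by rw [top_inf_eq]; exact hgen i
  have hφu : φ (u i) ≠ 0 := by simpa using hi
  rw [spread_eq_zero fun j hj j' hj' =>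
    hgen'.apply_eq_of_mem_maximizers (hu i) Submodule.mem_top hφu Submodule.mem_top hj hj',
    mul_zero]

theorem HasJumpExpansion.cons {L : Submodule ℝ V} {φ : Module.Dual ℝ V} {w : V} {ws : List V}
    {F F' : V → ℝ} (h : HasJumpExpansion A β u ν L ws F) (hu : ∀ i, IsLinealityDir (A i) (u i))
    (hw : w ∈ L) (hφw : φ w ≠ 0)
    (hF : ∀ x ∈ L ⊓ LinearMap.ker φ, ∀ᶠ s in 𝓝[>] (0 : ℝ), F (x + s • w) - F (x + s • -w) = F' x) :
    HasJumpExpansion A β u ν (L ⊓ LinearMap.ker φ) (w :: ws) F' := by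
  classical
  intro x hx hgen
  have hside : ∀ v ∈ L, φ v ≠ 0 → ∀ᶠ s in 𝓝[>] (0 : ℝ), F (x + s • v) =
      ∑ i ∈ univ.filter (u · ∈ L),
        β i * faceJump (A i) ν ws (maximizers (A i · v) (maximizers (A i · x) univ)) := by
    intro v hv hφv
    filter_upwards [eventually_all.2 fun i => (hgen i).eventually_add_smul hv hφv,
      eventually_all.2 fun i => eventually_maximizers_apply_add_smul (A i) x v univ]
      with s hsgen hsface
    rw [h _ (L.add_mem hx.1 (L.smul_mem s hv)) hsgen]
    simp only [hsface]
  obtain ⟨s, hFs, hp, hm⟩ := ((hF x hx).and ((hside w hw hφw).and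
    (hside (-w) (L.neg_mem hw) (by simpa using hφw)))).exists
  have hsub : univ.filter (u · ∈ L ⊓ LinearMap.ker φ) ⊆ univ.filter (u · ∈ L) := fun i hi =>
    mem_filter.2 ⟨mem_univ i, (Submodule.mem_inf.1 (mem_filter.1 hi).2).1⟩
  calc F' x = ∑ i ∈ univ.filter (u · ∈ L),
        β i * faceJump (A i) ν (w :: ws) (maximizers (A i · x) univ) := by
        rw [← hFs, hp, hm, ← sum_sub_distrib]
        exact sum_congr rfl fun i _ => by rw [faceJump, mul_sub]
    _ = _ := by
      refine (sum_subset hsub fun i hi hi' => ?_).symm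
      have huL : u i ∈ L := (mem_filter.1 hi).2
      have hφu : φ (u i) ≠ 0 := fun h0 => hi' (mem_filter.2 ⟨mem_univ _, huL, h0⟩)
      rw [faceJump_cons_eq_zero fun j hj j' hj' =>
        (hgen i).apply_eq_of_mem_maximizers (hu i) huL hφu hw hj hj', mul_zero]

theorem HasJumpExpansion.apply_neg_eq {e : V} {ws : List V} {F : V → ℝ}
    (h : HasJumpExpansion A β u ν (ℝ ∙ e) ws F) (hu : ∀ i, IsLinealityDir (A i) (u i))
    (hu0 : ∀ i, u i ≠ 0) : F (-e) = F e := by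
  classical
  have hgen : ∀ i, IsGeneric (A i) (ℝ ∙ e) e := fun i j j' hjj' =>
    (Submodule.span_singleton_le_iff_mem _ _).2 (by simpa [sub_eq_zero] using hjj')
  have hgen' : ∀ i, IsGeneric (A i) (ℝ ∙ e) (-e) := fun i j j' hjj' =>
    hgen i j j' (by simpa using hjj')
  rw [h _ (Submodule.neg_mem _ (Submodule.mem_span_singleton_self e)) hgen',
    h e (Submodule.mem_span_singleton_self e) hgen]
  refine sum_congr rfl fun i hi => ?_
  obtain ⟨c, hc⟩ := Submodule.mem_span_singleton.1 (mem_filter.1 hi).2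
  have hc0 : c ≠ 0 := by
    rintro rfl
    exact hu0 i (by simp [← hc])
  have : -e = e + (-2 / c) • u i := by
    rw [← hc, smul_smul, div_mul_cancel₀ _ hc0]
    module
  rw [this, maximizers_apply_add_smul_of_isLinealityDir (hu i)]

end JumpExpansion

end MaxLinear

namespace HardFunction

open MaxLinear

variable (m : ℕ)

/- Here `n = m + 3`, with 0-based coordinates: `cubeIdx m r` for `r ≤ m` are the paper's
`x_1, …, x_{n-2}`, while `yIdx m` and `zIdx m` are `x_{n-1}` and `x_n`. -/

def yIdx : Fin (m + 3) := ⟨m + 1, by omega⟩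

def zIdx : Fin (m + 3) := ⟨m + 2, by omega⟩

def cubeIdx (r : ℕ) : Fin (m + 3) := Fin.ofNat (m + 3) r

def cubeSum (x : Vec (m + 3)) : ℝ :=
  ∑ j ∈ univ.filter (fun j : Fin (m + 3) => (j : ℕ) < m + 1), max 0 (x j)

def hardFn (x : Vec (m + 3)) : ℝ :=
  max (cubeSum m x) (max (x (yIdx m)) (x (zIdx m)))

/-- The jump of the one-sided derivatives of `hardFn` along `dir m 0` across `ker (cut m 0)`; each
later jump down the flag reproduces it. -/
def kink (x : Vec (m + 3)) : ℝ :=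
  if cubeSum m x ≤ x (yIdx m) then 2 else 0

def cut : ℕ → (Vec (m + 3) →ₗ[ℝ] ℝ)
  | 0 => (LinearMap.proj (yIdx m) : Vec (m + 3) →ₗ[ℝ] ℝ) - LinearMap.proj (zIdx m)
  | 1 => LinearMap.proj (yIdx m)
  | r + 2 => LinearMap.proj (cubeIdx m r)

def dir : ℕ → Vec (m + 3)
  | 0 => Pi.single (yIdx m) 1 - Pi.single (zIdx m) 1
  | 1 => Pi.single (yIdx m) 1 + Pi.single (zIdx m) 1
  | r + 2 => -Pi.single (cubeIdx m r) 1

def flag : ℕ → Submodule ℝ (Vec (m + 3))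
  | 0 => LinearMap.ker (cut m 0)
  | k + 1 => flag k ⊓ LinearMap.ker (cut m (k + 1))

variable {m}

theorem val_cubeIdx {r : ℕ} (hr : r < m + 3) : (cubeIdx m r : ℕ) = r := by
  simp [cubeIdx, Nat.mod_eq_of_lt hr]

theorem yIdx_ne_zIdx : yIdx m ≠ zIdx m := by simp [yIdx, zIdx, Fin.ext_iff]

theorem cubeIdx_ne_yIdx {r : ℕ} (hr : r < m + 1) : cubeIdx m r ≠ yIdx m := by
  simp [yIdx, Fin.ext_iff, val_cubeIdx (show r < m + 3 by omega)]; omega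

theorem cubeIdx_ne_zIdx {r : ℕ} (hr : r < m + 1) : cubeIdx m r ≠ zIdx m := by
  simp [zIdx, Fin.ext_iff, val_cubeIdx (show r < m + 3 by omega)]; omega

theorem cubeSum_nonneg (x : Vec (m + 3)) : 0 ≤ cubeSum m x :=
  sum_nonneg fun j _ => le_max_left 0 (x j)

theorem cubeSum_add_smul_of_forall_eq_zero {v : Vec (m + 3)}
    (hv : ∀ j : Fin (m + 3), (j : ℕ) < m + 1 → v j = 0) (x : Vec (m + 3)) (s : ℝ) :
    cubeSum m (x + s • v) = cubeSum m x :=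
  sum_congr rfl fun j hj => by simp [hv j (mem_filter.1 hj).2]

theorem cubeSum_add_smul_single {x : Vec (m + 3)} {r : ℕ} (hr : r < m + 1)
    (hx : x (cubeIdx m r) = 0) (c : ℝ) :
    cubeSum m (x + c • Pi.single (cubeIdx m r) 1) = cubeSum m x + max 0 c := by
  have hrmem : cubeIdx m r ∈ univ.filter (fun j : Fin (m + 3) => (j : ℕ) < m + 1) := by
    simp [val_cubeIdx (show r < m + 3 by omega)]
    omega
  have hrest : ∀ j ∈ (univ.filter (fun j : Fin (m + 3) => (j : ℕ) < m + 1)).erase (cubeIdx m r),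
      max 0 ((x + c • Pi.single (cubeIdx m r) 1 : Vec (m + 3)) j) = max 0 (x j) := fun j hj => by
    simp [(mem_erase.1 hj).1]
  rw [cubeSum, cubeSum, ← sum_erase_add _ _ hrmem, ← sum_erase_add _ _ hrmem, sum_congr rfl hrest]
  simp [hx]

theorem mem_flag_succ_iff {k : ℕ} {x : Vec (m + 3)} :
    x ∈ flag m (k + 1) ↔ x (yIdx m) = 0 ∧ x (zIdx m) = 0 ∧ ∀ r < k, x (cubeIdx m r) = 0 := by
  induction k with
  | zero =>
    simp only [flag, cut, Submodule.mem_inf, LinearMap.mem_ker, LinearMap.sub_apply,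
      LinearMap.proj_apply, sub_eq_zero]
    constructor
    · rintro ⟨hyz, hy⟩
      exact ⟨hy, hyz ▸ hy, fun r hr => absurd hr (Nat.not_lt_zero r)⟩
    · rintro ⟨hy, hz, -⟩
      exact ⟨hy.trans hz.symm, hy⟩
  | succ k ih =>
    rw [flag, Submodule.mem_inf, ih, Nat.forall_lt_succ_right]
    simp [cut, and_assoc]

theorem cubeIdx_ne_cubeIdx {r r' : ℕ} (hr : r < m + 3) (hr' : r' < m + 3) (h : r ≠ r') :
    cubeIdx m r ≠ cubeIdx m r' := by
  simp [Fin.ext_iff, val_cubeIdx hr, val_cubeIdx hr', h]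

theorem flag_succ_eq_span : flag m (m + 1) = ℝ ∙ Pi.single (cubeIdx m m) 1 := by
  have hy := cubeIdx_ne_yIdx (m := m) (r := m) (by omega)
  have hz := cubeIdx_ne_zIdx (m := m) (r := m) (by omega)
  apply le_antisymm
  · intro x hx
    obtain ⟨hxy, hxz, hxr⟩ := mem_flag_succ_iff.1 hx
    refine Submodule.mem_span_singleton.2 ⟨x (cubeIdx m m), funext fun j => ?_⟩
    by_cases hj : j = cubeIdx m m
    · simp [hj]
    obtain ⟨j, hj'⟩ := j
    simp only [Pi.smul_apply, Pi.single_apply, hj, if_false, smul_zero]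
    rcases (by omega : j < m ∨ j = m ∨ j = m + 1 ∨ j = m + 2) with h | rfl | rfl | rfl
    · have := hxr j h
      rwa [show cubeIdx m j = ⟨j, hj'⟩ from Fin.ext (val_cubeIdx hj'), eq_comm] at this
    · exact absurd (Fin.ext (val_cubeIdx hj').symm) hj
    · exact hxy.symm
    · exact hxz.symm
  · rw [Submodule.span_singleton_le_iff_mem, mem_flag_succ_iff]
    refine ⟨by simp [hy.symm], by simp [hz.symm], fun r hr => ?_⟩
    simp [cubeIdx_ne_cubeIdx (show r < m + 3 by omega) (show m < m + 3 by omega) hr.ne]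

theorem dir_mem_flag {k : ℕ} (hk : k ≤ m) : dir m (k + 1) ∈ flag m k := by
  rcases k with _ | r
  · simp [flag, cut, dir, yIdx_ne_zIdx, yIdx_ne_zIdx.symm]
  · rw [mem_flag_succ_iff]
    refine ⟨by simp [dir, cubeIdx_ne_yIdx (show r < m + 1 by omega)],
      by simp [dir, cubeIdx_ne_zIdx (show r < m + 1 by omega)], fun r' hr' => ?_⟩
    simp [dir, cubeIdx_ne_cubeIdx (show r' < m + 3 by omega) (show r < m + 3 by omega) hr'.ne]

theorem cut_dir_ne_zero (k : ℕ) : cut m (k + 1) (dir m (k + 1)) ≠ 0 := by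
  rcases k with _ | r
  · simp [cut, dir, yIdx_ne_zIdx]
  · simp [cut, dir]

theorem dir_apply_of_lt_two {k : ℕ} (hk : k < 2) {j : Fin (m + 3)} (hj : (j : ℕ) < m + 1) :
    dir m k j = 0 := by
  have hy : (j : ℕ) ≠ m + 1 := by omega
  have hz : (j : ℕ) ≠ m + 2 := by omega
  interval_cases k <;> simp [dir, Fin.ext_iff, yIdx, zIdx, hy, hz]

theorem hardFn_second_difference {x : Vec (m + 3)} (hx : x ∈ LinearMap.ker (cut m 0)) :
    ∀ᶠ s in 𝓝[>] (0 : ℝ), hardFn m (x + s • dir m 0) + hardFn m (x + s • -dir m 0) -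
      2 * hardFn m x = s * kink m x := by
  have hyz : x (yIdx m) = x (zIdx m) := by simpa [cut, sub_eq_zero] using hx
  have hcube := fun j => dir_apply_of_lt_two (m := m) (k := 0) (by omega) (j := j)
  have hval : ∀ s : ℝ, 0 ≤ s → hardFn m (x + s • dir m 0) = max (cubeSum m x) (x (yIdx m) + s) ∧
      hardFn m (x + s • -dir m 0) = max (cubeSum m x) (x (yIdx m) + s) := by
    intro s hs
    rw [hardFn, hardFn, smul_neg, ← neg_smul, cubeSum_add_smul_of_forall_eq_zero hcube,
      cubeSum_add_smul_of_forall_eq_zero hcube]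
    simp only [dir, Pi.add_apply, Pi.smul_apply, Pi.sub_apply, Pi.single_eq_same,
      Pi.single_eq_of_ne yIdx_ne_zIdx, Pi.single_eq_of_ne yIdx_ne_zIdx.symm, smul_eq_mul, ← hyz,
      sub_zero, zero_sub, mul_one, mul_neg, neg_neg]
    constructor <;> congr 1
    · exact max_eq_left (by linarith)
    · exact max_eq_right (by linarith)
  have hx0 : hardFn m x = max (cubeSum m x) (x (yIdx m)) := by rw [hardFn, ← hyz, max_self]
  by_cases hG : cubeSum m x ≤ x (yIdx m)
  · filter_upwards [self_mem_nhdsWithin] with s (hs : 0 < s)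
    rw [(hval s hs.le).1, (hval s hs.le).2, hx0, kink, if_pos hG, max_eq_right hG,
      max_eq_right (by linarith)]
    ring
  · filter_upwards [Ioo_mem_nhdsGT (sub_pos.2 (lt_of_not_ge hG))] with s ⟨hs0, hs⟩
    rw [(hval s hs0.le).1, (hval s hs0.le).2, hx0, kink, if_neg hG, max_eq_left (by linarith),
      max_eq_left (by linarith)]
    ring

theorem kink_jump_one {x : Vec (m + 3)} (hx : x ∈ flag m 1) :
    ∀ᶠ s in 𝓝[>] (0 : ℝ), kink m (x + s • dir m 1) - kink m (x + s • -dir m 1) = kink m x := by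
  have hy : x (yIdx m) = 0 := (mem_flag_succ_iff.1 hx).1
  have hcube := fun j => dir_apply_of_lt_two (m := m) (k := 1) (by omega) (j := j)
  have hk : ∀ s : ℝ, kink m (x + s • dir m 1) = if cubeSum m x ≤ s then 2 else 0 := fun s => by
    rw [kink, cubeSum_add_smul_of_forall_eq_zero hcube]
    simp [dir, hy, yIdx_ne_zIdx.symm]
  have hG := cubeSum_nonneg x
  rw [kink, hy]
  simp only [smul_neg, ← neg_smul, hk]
  by_cases h : cubeSum m x ≤ 0
  · filter_upwards [self_mem_nhdsWithin] with s (hs : 0 < s)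
    rw [if_pos (by linarith), if_neg (by linarith), if_pos h, sub_zero]
  · filter_upwards [Ioo_mem_nhdsGT (lt_of_not_ge h)] with s ⟨hs0, hs⟩
    rw [if_neg (by linarith), if_neg (by linarith), if_neg h, sub_zero]

theorem kink_jump_cube {r : ℕ} (hr : r < m) {x : Vec (m + 3)} (hx : x ∈ flag m (r + 2)) {s : ℝ}
    (hs : 0 < s) :
    kink m (x + s • dir m (r + 2)) - kink m (x + s • -dir m (r + 2)) = kink m x := by
  obtain ⟨hy, -, hxr⟩ := mem_flag_succ_iff.1 hx
  have hne := cubeIdx_ne_yIdx (m := m) (r := r) (by omega)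
  have hG := cubeSum_nonneg x
  simp only [dir, smul_neg, neg_neg, ← neg_smul]
  rw [kink, kink, kink, cubeSum_add_smul_single (by omega) (hxr r (by omega)),
    cubeSum_add_smul_single (by omega) (hxr r (by omega))]
  simp [Pi.single_eq_of_ne hne.symm, hy, max_eq_left (neg_nonpos.2 hs.le), max_eq_right hs.le]
  linarith

theorem eventually_kink_jump {k : ℕ} (hk : k ≤ m) {x : Vec (m + 3)} (hx : x ∈ flag m (k + 1)) :
    ∀ᶠ s in 𝓝[>] (0 : ℝ), kink m (x + s • dir m (k + 1)) - kink m (x + s • -dir m (k + 1)) =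
      kink m x := by
  rcases k with _ | r
  · exact kink_jump_one hx
  · filter_upwards [self_mem_nhdsWithin] with s hs using kink_jump_cube (by omega) hx hs

theorem kink_single : kink m (Pi.single (cubeIdx m m) 1) = 0 := by
  have h := cubeSum_add_smul_single (x := 0) (show m < m + 1 by omega) rfl 1
  simp only [zero_add, one_smul] at h
  simp [kink, h, show cubeSum m 0 = 0 by simp [cubeSum],
    cubeIdx_ne_yIdx (m := m) (r := m) (by omega) |>.symm]

theorem kink_neg_single : kink m (-Pi.single (cubeIdx m m) 1) = 2 := by
  have h := cubeSum_add_smul_single (x := 0) (show m < m + 1 by omega) rfl (-1)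
  simp only [zero_add, neg_one_smul] at h
  simp [kink, h, show cubeSum m 0 = 0 by simp [cubeSum],
    cubeIdx_ne_yIdx (m := m) (r := m) (by omega) |>.symm]

theorem exists_hasJumpExpansion_flag {p : ℕ} {A : Fin p → Fin (m + 3) → Module.Dual ℝ (Vec (m + 3))}
    {β : Fin p → ℝ} {u : Fin p → Vec (m + 3)} (hu : ∀ i, IsLinealityDir (A i) (u i))
    (hf : ∀ x, hardFn m x = ∑ i, β i * ⨆ j, A i j x) :
    ∀ k ≤ m + 1, ∃ ws, HasJumpExpansion A β u (dir m 0) (flag m k) ws (kink m)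
  | 0, _ => ⟨[], hasJumpExpansion_ker hu hf fun _ hx => hardFn_second_difference hx⟩
  | k + 1, hk =>
    have ⟨ws, h⟩ := exists_hasJumpExpansion_flag hu hf k (by omega)
    ⟨_, h.cons hu (dir_mem_flag (by omega)) (cut_dir_ne_zero k)
      fun _ hx => eventually_kink_jump (by omega) hx⟩

theorem hardFn_ne_sum_ciSup {p : ℕ} (β : Fin p → ℝ)
    (A : Fin p → Fin (m + 3) → Module.Dual ℝ (Vec (m + 3))) :
    hardFn m ≠ fun x => ∑ i, β i * ⨆ j, A i j x := by
  intro hf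
  choose u hu0 hu using fun i => exists_ne_zero_isLinealityDir (A i) (by simp)
  obtain ⟨ws, h⟩ := exists_hasJumpExpansion_flag hu (congrFun hf) (m + 1) le_rfl
  rw [flag_succ_eq_span] at h
  have := h.apply_neg_eq hu hu0
  rw [kink_neg_single, kink_single] at this
  norm_num at this

end HardFunction

/-- `f(x) = max{Σ_{j=1}^{n-2} max{0,x_j}, x_{n-1}, x_n}` is not in
`MAX_n(n)`. -/
theorem hard_function_not_in_MAXn {n : ℕ} (hn : 3 ≤ n) :
    (fun x : Vec n =>
      max (∑ j ∈ Finset.univ.filter (fun j : Fin n => (j : ℕ) < n - 2), max 0 (x j))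
        (max (x ⟨n - 2, by omega⟩) (x ⟨n - 1, by omega⟩))) ∉ MAXn n n := by
  obtain ⟨m, rfl⟩ : ∃ m, n = m + 3 := ⟨n - 3, by omega⟩
  rintro ⟨p, β, a, hf⟩
  -- `hf` is, up to unfolding, an equation between `hardFn m` and a sum of dot-product maxima
  exact HardFunction.hardFn_ne_sum_ciSup β (fun i j => dotProductEquiv ℝ _ (a i j)) hf
end SparseMaxout
end
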